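/- Let X be a hyperkähler manifold of dimension 2n, O(1) a very ample line bundle, d_i = h^0(O(i)), and P the ℙⁿ-twist at O_X, and let A_1(k, l₁) = P(O(−k−1)) ⊗ O(−l₁). Suppose there are exact triangles O(−l₁)^{⊕d_{k+1}}[−2n−2] → O(−l₁)^{⊕d_{k+1}}[−2n] → C → [1] and C → O(−k−1−l₁) → A₁ → [1], and that h^j(O(−i)) = 0 for j ≠ 2n and h^{2n}(O(−i)) = d_i for i > 0. Then h^{2n}(A_1) = d_{k+l₁+1}, h^{4n−1}(A_1) = h^{4n}(A_1) = d_{k+1}·d_{l₁}, and h^j(A_1) = 0 otherwise. -/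
import Mathlib


private lemma mapZero {X B : Type*} [AddCommGroup X] [Module ℂ X] [FiniteDimensional ℂ X]
    [AddCommGroup B] [Module ℂ B] [FiniteDimensional ℂ B] (f : X →ₗ[ℂ] B)
    (h : Module.finrank ℂ X = 0 ∨ Module.finrank ℂ B = 0) : f = 0 := by
  cases h with
  | inl h =>
    have : Subsingleton X := Module.finrank_zero_iff.mp h
    ext x; rw [Subsingleton.elim x 0]; simp
  | inr h =>
    have : Subsingleton B := Module.finrank_zero_iff.mp h
    ext x; exact Subsingleton.elim _ _

private lemma keylem {X B C D Y : Type*}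
    [AddCommGroup X] [Module ℂ X] [FiniteDimensional ℂ X]
    [AddCommGroup B] [Module ℂ B] [FiniteDimensional ℂ B]
    [AddCommGroup C] [Module ℂ C] [FiniteDimensional ℂ C]
    [AddCommGroup D] [Module ℂ D] [FiniteDimensional ℂ D]
    [AddCommGroup Y] [Module ℂ Y] [FiniteDimensional ℂ Y]
    (f : X →ₗ[ℂ] B) (g : B →ₗ[ℂ] C) (h : C →ₗ[ℂ] D) (i : D →ₗ[ℂ] Y)
    (e1 : Function.Exact f g) (e2 : Function.Exact g h) (e3 : Function.Exact h i)
    (hX : Module.finrank ℂ X = 0 ∨ Module.finrank ℂ B = 0)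
    (hY : Module.finrank ℂ D = 0 ∨ Module.finrank ℂ Y = 0) :
    Module.finrank ℂ C = Module.finrank ℂ B + Module.finrank ℂ D := by
  have hf : f = 0 := mapZero f hX
  have hi : i = 0 := mapZero i hY
  have hginj : Function.Injective g := by
    rw [← LinearMap.ker_eq_bot, LinearMap.exact_iff.mp e1, hf, LinearMap.range_zero]
  have hhsurj : LinearMap.range h = ⊤ := by
    rw [← LinearMap.exact_iff.mp e3, hi, LinearMap.ker_zero]
  have h1 := LinearMap.finrank_range_add_finrank_ker h
  rw [hhsurj, finrank_top, LinearMap.exact_iff.mp e2,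
    LinearMap.finrank_range_of_inj hginj] at h1
  omega

/-- The homological computation of Lemma `example of calculation m=1`:
`U j`, `V j` are the cohomologies of `O(−l₁)^{⊕ d_{k+1}}[−2n−2]` and
`O(−l₁)^{⊕ d_{k+1}}[−2n]` (concentrated in degrees `4n+2` and `4n` with
dimension `d_{k+1}·d_{l₁}`, by Kodaira-type vanishing), `M j` is the cohomology
of `O(−k−1−l₁)` (concentrated in degree `2n` with dimension `d_{k+l₁+1}`), and
the long exact sequences come from the two exact triangles
`O(−l₁)^{⊕d_{k+1}}[−2n−2] → O(−l₁)^{⊕d_{k+1}}[−2n] → C → [1]` and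
`C → O(−k−1−l₁) → A₁ → [1]`. Conclusion: `h^{2n}(A₁) = d_{k+l₁+1}`,
`h^{4n−1}(A₁) = h^{4n}(A₁) = d_{k+1}·d_{l₁}`, and `h^j(A₁) = 0` otherwise. -/
theorem stmt11 (n k l : ℕ) (hn : 0 < n) (hk : 0 < k) (hl : 0 < l)
    (d : ℕ → ℕ) (hd : ∀ i, 0 < d i)
    (U V Cc M A : ℤ → Type*)
    [∀ j, AddCommGroup (U j)] [∀ j, Module ℂ (U j)] [∀ j, FiniteDimensional ℂ (U j)]
    [∀ j, AddCommGroup (V j)] [∀ j, Module ℂ (V j)] [∀ j, FiniteDimensional ℂ (V j)]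
    [∀ j, AddCommGroup (Cc j)] [∀ j, Module ℂ (Cc j)] [∀ j, FiniteDimensional ℂ (Cc j)]
    [∀ j, AddCommGroup (M j)] [∀ j, Module ℂ (M j)] [∀ j, FiniteDimensional ℂ (M j)]
    [∀ j, AddCommGroup (A j)] [∀ j, Module ℂ (A j)] [∀ j, FiniteDimensional ℂ (A j)]
    -- long exact sequence of the first triangle
    (p : ∀ j, U j →ₗ[ℂ] V j) (q : ∀ j, V j →ₗ[ℂ] Cc j)
    (r : ∀ j, Cc j →ₗ[ℂ] U (j + 1))
    (hex1 : ∀ j, Function.Exact (p j) (q j))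
    (hex2 : ∀ j, Function.Exact (q j) (r j))
    (hex3 : ∀ j, Function.Exact (r j) (p (j + 1)))
    -- long exact sequence of the second triangle
    (s : ∀ j, Cc j →ₗ[ℂ] M j) (u : ∀ j, M j →ₗ[ℂ] A j)
    (w : ∀ j, A j →ₗ[ℂ] Cc (j + 1))
    (hex4 : ∀ j, Function.Exact (s j) (u j))
    (hex5 : ∀ j, Function.Exact (u j) (w j))
    (hex6 : ∀ j, Function.Exact (w j) (s (j + 1)))
    -- cohomology dimensions of the known terms (Kodaira-type vanishing)
    (hU : ∀ j : ℤ, Module.finrank ℂ (U j) =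
      if j = (4 * n + 2 : ℤ) then d (k + 1) * d l else 0)
    (hV : ∀ j : ℤ, Module.finrank ℂ (V j) =
      if j = (4 * n : ℤ) then d (k + 1) * d l else 0)
    (hM : ∀ j : ℤ, Module.finrank ℂ (M j) =
      if j = (2 * n : ℤ) then d (k + l + 1) else 0) :
    ∀ j : ℤ, Module.finrank ℂ (A j) =
      if j = (2 * n : ℤ) then d (k + l + 1)
      else if j = (4 * n - 1 : ℤ) ∨ j = (4 * n : ℤ) then d (k + 1) * d l
      else 0 := by
  have hCc : ∀ j : ℤ, Module.finrank ℂ (Cc j) =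
      Module.finrank ℂ (V j) + Module.finrank ℂ (U (j + 1)) := by
    intro j
    refine keylem (p j) (q j) (r j) (p (j + 1)) (hex1 j) (hex2 j) (hex3 j) ?_ ?_
    · rw [hU, hV]
      set D := d (k + 1) * d l with hD
      split_ifs with h1 h2 <;> omega
    · rw [hU, hV]
      set D := d (k + 1) * d l with hD
      split_ifs with h1 h2 <;> omega
  have hCc' : ∀ j : ℤ, Module.finrank ℂ (Cc j) =
      if j = (4 * n : ℤ) ∨ j = (4 * n + 1 : ℤ) then d (k + 1) * d l else 0 := by
    intro j
    rw [hCc j, hV, hU]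
    set D := d (k + 1) * d l with hD
    split_ifs <;> omega
  have hA : ∀ j : ℤ, Module.finrank ℂ (A j) =
      Module.finrank ℂ (M j) + Module.finrank ℂ (Cc (j + 1)) := by
    intro j
    refine keylem (s j) (u j) (w j) (s (j + 1)) (hex4 j) (hex5 j) (hex6 j) ?_ ?_
    · rw [hCc', hM]
      set D := d (k + 1) * d l with hD
      set E := d (k + l + 1) with hE
      split_ifs <;> omega
    · rw [hCc', hM]
      set D := d (k + 1) * d l with hD
      set E := d (k + l + 1) with hE
      split_ifs <;> omega
  intro j
  rw [hA j, hM, hCc']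
  set D := d (k + 1) * d l with hD
  set E := d (k + l + 1) with hE
  split_ifs <;> omega
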